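/- arXiv:2103.09177 — 7 statements merged into one kernel-verified Lean document; each statement's English description precedes it below -/
import Mathlib

section
/- For the hinge loss φ(t) = max(1−t, 0), the function ψ_φ(θ) := inf{C_θ(α) : α ≤ 0} − inf{C_θ(α) : α ∈ ℝ}, where C_θ(α) = (1+θ)φ(α)/2 + (1−θ)φ(−α)/2, equals |θ| for all θ ∈ [0,1]. -/
/-- For the hinge loss `φ(t) = max(1 - t, 0)`, the calibration function
`ψ_φ(θ) = inf{C_θ(α) : α ≤ 0} - inf{C_θ(α) : α ∈ ℝ}`, where
`C_θ(α) = (1+θ)φ(α)/2 + (1-θ)φ(-α)/2`, equals `|θ|` for all `θ ∈ [0,1]`. -/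
theorem hinge_calibration_function (θ : ℝ) (hθ : θ ∈ Set.Icc (0 : ℝ) 1) :
    sInf ((fun α : ℝ =>
        (1 + θ) * max (1 - α) 0 / 2 + (1 - θ) * max (1 - (-α)) 0 / 2) ''
      {α : ℝ | α ≤ 0})
    - sInf (Set.range (fun α : ℝ =>
        (1 + θ) * max (1 - α) 0 / 2 + (1 - θ) * max (1 - (-α)) 0 / 2))
    = |θ| := by
  obtain ⟨h0, h1⟩ := hθ
  set f : ℝ → ℝ := fun α =>
      (1 + θ) * max (1 - α) 0 / 2 + (1 - θ) * max (1 - (-α)) 0 / 2 with hf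
  have hglb : ∀ α : ℝ, 1 - θ ≤ f α := by
    intro α
    have h1a := le_max_left (1 - α) 0
    have h2a := le_max_right (1 - α) 0
    have h1b := le_max_left (1 - (-α)) 0
    have h2b := le_max_right (1 - (-α)) 0
    simp only [hf]
    nlinarith [mul_nonneg h0 h2a]
  have hlb0 : ∀ α : ℝ, α ≤ 0 → 1 ≤ f α := by
    intro α hα
    have hmax1 : max (1 - α) 0 = 1 - α := max_eq_left (by linarith)
    rcases le_total α (-1) with h | h
    · have hmax2 : max (1 - (-α)) 0 = 0 := max_eq_right (by linarith)
      simp only [hf, hmax1, hmax2]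
      nlinarith
    · have hmax2 : max (1 - (-α)) 0 = 1 + α := by
        rw [max_eq_left (by linarith)]; ring
      simp only [hf, hmax1, hmax2]
      nlinarith [mul_nonneg h0 (neg_nonneg.mpr hα)]
  have hA : sInf (f '' {α : ℝ | α ≤ 0}) = 1 := by
    apply le_antisymm
    · have h : f 0 = 1 := by simp [hf]; ring
      calc sInf (f '' {α : ℝ | α ≤ 0}) ≤ f 0 :=
            csInf_le ⟨1, by rintro x ⟨α, hα, rfl⟩; exact hlb0 α hα⟩
              ⟨0, by simp, rfl⟩
        _ = 1 := h
    · have hne : (f '' {α : ℝ | α ≤ 0}).Nonempty := ⟨f 0, ⟨0, by simp, rfl⟩⟩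
      apply le_csInf hne
      rintro x ⟨α, hα, rfl⟩
      exact hlb0 α hα
  have hB : sInf (Set.range f) = 1 - θ := by
    apply le_antisymm
    · have : f 1 = 1 - θ := by
        simp only [hf]
        norm_num
      calc sInf (Set.range f) ≤ f 1 :=
            csInf_le ⟨1 - θ, by rintro x ⟨α, rfl⟩; exact hglb α⟩ ⟨1, rfl⟩
        _ = 1 - θ := this
    · have hne : (Set.range f).Nonempty := ⟨f 1, ⟨1, rfl⟩⟩
      apply le_csInf hne
      rintro x ⟨α, rfl⟩
      exact hglb α
  rw [hA, hB, abs_of_nonneg h0]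
  ring
end

section
/- For the exponential loss φ(t) = exp(−t), the calibration function ψ_φ(θ) = inf{C_θ(α) : α ≤ 0} − inf{C_θ(α) : α ∈ ℝ} equals 1 − sqrt(1 − θ²) for θ ∈ [0,1], where C_θ(α) = (1+θ)e^{−α}/2 + (1−θ)e^{α}/2. -/
/-- For the exponential loss `φ(t) = exp(-t)`, the calibration function
`ψ_φ(θ) = inf{C_θ(α) : α ≤ 0} - inf{C_θ(α) : α ∈ ℝ}`, where
`C_θ(α) = (1+θ)e^{-α}/2 + (1-θ)e^{α}/2`, equals `1 - sqrt(1 - θ²)` for `θ ∈ [0,1]`. -/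
theorem exponential_calibration_function (θ : ℝ) (hθ : θ ∈ Set.Icc (0 : ℝ) 1) :
    sInf ((fun α : ℝ =>
        (1 + θ) * Real.exp (-α) / 2 + (1 - θ) * Real.exp α / 2) ''
      {α : ℝ | α ≤ 0})
    - sInf (Set.range (fun α : ℝ =>
        (1 + θ) * Real.exp (-α) / 2 + (1 - θ) * Real.exp α / 2))
    = 1 - Real.sqrt (1 - θ ^ 2) := by
  obtain ⟨h0, h1⟩ := hθ
  have hf0 : (1 + θ) * Real.exp (-(0:ℝ)) / 2 + (1 - θ) * Real.exp 0 / 2 = 1 := by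
    simp only [neg_zero, Real.exp_zero, mul_one]; ring
  -- first infimum is 1
  have hinf1 : sInf ((fun α : ℝ =>
      (1 + θ) * Real.exp (-α) / 2 + (1 - θ) * Real.exp α / 2) ''
      {α : ℝ | α ≤ 0}) = 1 := by
    apply le_antisymm
    · apply csInf_le
      · refine ⟨0, ?_⟩
        rintro x ⟨α, hα, rfl⟩
        have := Real.exp_pos (-α)
        have := Real.exp_pos α
        nlinarith
      · exact ⟨0, by simp, hf0⟩
    · have hne : ((fun α : ℝ =>
          (1 + θ) * Real.exp (-α) / 2 + (1 - θ) * Real.exp α / 2) ''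
          {α : ℝ | α ≤ 0}).Nonempty := ⟨1, 0, by simp, hf0⟩
      apply le_csInf hne
      rintro x ⟨α, hα, rfl⟩
      have hu : Real.exp α ≤ 1 := Real.exp_le_one_iff.mpr hα
      have hup : 0 < Real.exp α := Real.exp_pos α
      have hv : Real.exp (-α) = 1 / Real.exp α := by rw [Real.exp_neg, one_div]
      set u := Real.exp α with hu'
      have expand : (1 + θ) * Real.exp (-α) / 2 + (1 - θ) * Real.exp α / 2 - 1
          = ((1 - u) ^ 2 + θ * (1 - u ^ 2)) / (2 * u) := by
        rw [hv]; field_simp; ring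
      have hnum : (0:ℝ) ≤ (1 - u) ^ 2 + θ * (1 - u ^ 2) := by nlinarith
      nlinarith [div_nonneg hnum (by positivity : (0:ℝ) ≤ 2 * u)]
  -- second infimum is sqrt (1 - θ^2)
  have hinf2 : sInf (Set.range (fun α : ℝ =>
      (1 + θ) * Real.exp (-α) / 2 + (1 - θ) * Real.exp α / 2))
      = Real.sqrt (1 - θ ^ 2) := by
    rcases eq_or_lt_of_le h1 with h1e | h1l
    · -- θ = 1 : f α = exp (-α), infimum 0
      subst h1e
      have hrange : Set.range (fun α : ℝ =>
          (1 + 1) * Real.exp (-α) / 2 + (1 - 1) * Real.exp α / 2)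
          = Set.range Real.exp := by
        ext x
        constructor
        · rintro ⟨α, rfl⟩
          exact ⟨-α, by simp only [neg_neg]; ring⟩
        · rintro ⟨α, rfl⟩
          exact ⟨-α, by simp only [neg_neg]; ring⟩
      rw [hrange, Real.range_exp, csInf_Ioi]
      norm_num
    · -- θ < 1
      have h1θ : (0:ℝ) < 1 - θ := by linarith
      set t := Real.sqrt (1 - θ ^ 2) with ht
      have ht2 : t ^ 2 = 1 - θ ^ 2 := Real.sq_sqrt (by nlinarith)
      have htn : 0 ≤ t := Real.sqrt_nonneg _
      have hlow : ∀ α : ℝ,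
          t ≤ (1 + θ) * Real.exp (-α) / 2 + (1 - θ) * Real.exp α / 2 := by
        intro α
        have hup : 0 < Real.exp α := Real.exp_pos α
        have hv : Real.exp (-α) = 1 / Real.exp α := by rw [Real.exp_neg, one_div]
        set u := Real.exp α with hu'
        have key : (0:ℝ) ≤ (1 - θ) * u ^ 2 - 2 * t * u + (1 + θ) := by
          nlinarith [sq_nonneg ((1 - θ) * u - t)]
        have expand : (1 + θ) * Real.exp (-α) / 2 + (1 - θ) * Real.exp α / 2 - t
            = ((1 - θ) * u ^ 2 - 2 * t * u + (1 + θ)) / (2 * u) := by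
          rw [hv]; field_simp; ring
        nlinarith [div_nonneg key (by positivity : (0:ℝ) ≤ 2 * u)]
      have hbdd : BddBelow (Set.range (fun α : ℝ =>
          (1 + θ) * Real.exp (-α) / 2 + (1 - θ) * Real.exp α / 2)) := by
        refine ⟨t, ?_⟩
        rintro x ⟨a, rfl⟩
        exact hlow a
      apply le_antisymm
      · -- attained at α = log r / 2
        set r := (1 + θ) / (1 - θ) with hr
        have hrp : 0 < r := by positivity
        set α := Real.log r / 2 with hα
        have hexp : Real.exp α = Real.sqrt r := by
          rw [Real.sqrt_eq_rpow, Real.rpow_def_of_pos hrp]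
          congr 1; ring
        refine le_trans (csInf_le hbdd ⟨α, rfl⟩) ?_
        have hs2 : Real.sqrt r ^ 2 = r := Real.sq_sqrt hrp.le
        have hsp : 0 < Real.sqrt r := Real.sqrt_pos.mpr hrp
        set s := Real.sqrt r with hs
        have hs1 : s ^ 2 * (1 - θ) = 1 + θ := by
          rw [hs2, hr]; field_simp
        have hst : s * t = 1 + θ := by
          have hx : (s * t) ^ 2 = (1 + θ) ^ 2 := by
            have : (s * t) ^ 2 = s ^ 2 * t ^ 2 := by ring
            rw [this, ht2]
            linear_combination (1 + θ) * hs1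
          have hz : (s * t - (1 + θ)) * (s * t + (1 + θ)) = 0 := by
            linear_combination hx
          rcases mul_eq_zero.mp hz with h | h
          · linarith
          · nlinarith [mul_nonneg hsp.le htn]
        have hv : Real.exp (-α) = 1 / s := by
          rw [Real.exp_neg, hexp, one_div]
        show (1 + θ) * Real.exp (-α) / 2 + (1 - θ) * Real.exp α / 2 ≤ t
        rw [hv, hexp]
        have hts : (1 + θ) * (1 / s) = t := by
          rw [← hst]; field_simp
        have hts2 : (1 - θ) * s = t := by
          have hc : ((1 - θ) * s) * s = t * s := by
            have : ((1 - θ) * s) * s = s ^ 2 * (1 - θ) := by ring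
            rw [this, hs1, ← hst]; ring
          exact mul_right_cancel₀ hsp.ne' hc
        linarith [hts, hts2]
      · exact le_csInf ⟨_, 0, rfl⟩ (by rintro x ⟨a, rfl⟩; exact hlow a)
  rw [hinf1, hinf2]
end

section
/- For the minimum-norm linear interpolant θ̂ = X†y with n < d and XX^T invertible, the bias term satisfies BIAS² = ‖Σ^{1/2} P⊥ θ*‖₂², where P⊥ = I_d − X^T(XX^T)^{-1}X is the orthogonal projector onto the kernel of X, Σ is the population covariance, and θ* is the true parameter. Moreover BIAS² ≤ ‖θ*‖₂² · ‖Σ − Σ̂‖ where Σ̂ = (1/n)X^T X, since Σ^{1/2}P⊥θ* = (Σ − Σ̂)^{1/2}P⊥θ* and projections contract norms. -/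
/-!
Since `X Xᵀ` is invertible, `P = Xᵀ (X Xᵀ)⁻¹ X` is a symmetric idempotent with `X P = X`, so the
residual `v = (1 - P) θ*` lies in the kernel of `X`. The bias is the second moment of the linear
form `x ↦ ⟨v, x⟩`, i.e. the quadratic form `vᵀ Σ v`. As `X v = 0`, subtracting `Σ̂ = Xᵀ X / n`
from `Σ` does not change this quadratic form, and `‖v‖ ≤ ‖θ*‖` because `1 - P` is an orthogonal
projector.
-/

open Matrix MeasureTheory

section Projection

variable {m n R : Type*} [Fintype m] [Fintype n] [DecidableEq m] [CommRing R]

theorem dotProduct_mulVec_comm_of_transpose_eq {Q : Matrix n n R} (hQ : Qᵀ = Q) (v w : n → R) :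
    Q *ᵥ v ⬝ᵥ w = v ⬝ᵥ Q *ᵥ w := by
  rw [dotProduct_mulVec, ← hQ, vecMul_transpose, hQ]

theorem mulVec_dotProduct_mulVec_self {Q : Matrix n n R} (hQ : Qᵀ = Q) (hQQ : IsIdempotentElem Q)
    (v : n → R) : Q *ᵥ v ⬝ᵥ Q *ᵥ v = v ⬝ᵥ Q *ᵥ v := by
  rw [dotProduct_mulVec_comm_of_transpose_eq hQ, mulVec_mulVec, hQQ.eq]

theorem mulVec_dotProduct_mulVec_self_le [LinearOrder R] [IsStrictOrderedRing R]
    [DecidableEq n] {Q : Matrix n n R} (hQ : Qᵀ = Q) (hQQ : IsIdempotentElem Q) (v : n → R) :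
    Q *ᵥ v ⬝ᵥ Q *ᵥ v ≤ v ⬝ᵥ v := by
  have hQ' : (1 - Q)ᵀ = 1 - Q := by rw [transpose_sub, transpose_one, hQ]
  have hcompl : 0 ≤ v ⬝ᵥ (1 - Q) *ᵥ v := by
    rw [← mulVec_dotProduct_mulVec_self hQ' hQQ.one_sub]
    exact Finset.sum_nonneg fun i _ => mul_self_nonneg _
  rw [mulVec_dotProduct_mulVec_self hQ hQQ]
  rw [sub_mulVec, one_mulVec, dotProduct_sub] at hcompl
  linarith

noncomputable def rowSpaceProj (X : Matrix m n R) : Matrix n n R := Xᵀ * (X * Xᵀ)⁻¹ * X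

theorem rowSpaceProj_transpose (X : Matrix m n R) : (rowSpaceProj X)ᵀ = rowSpaceProj X := by
  rw [rowSpaceProj, transpose_mul, transpose_mul, transpose_nonsing_inv, transpose_mul,
    transpose_transpose, Matrix.mul_assoc]

variable {X : Matrix m n R}

theorem mul_rowSpaceProj (hX : IsUnit (X * Xᵀ).det) : X * rowSpaceProj X = X := by
  rw [rowSpaceProj, ← Matrix.mul_assoc, ← Matrix.mul_assoc, mul_nonsing_inv _ hX, Matrix.one_mul]

theorem isIdempotentElem_rowSpaceProj (hX : IsUnit (X * Xᵀ).det) :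
    IsIdempotentElem (rowSpaceProj X) := by
  rw [IsIdempotentElem]
  nth_rw 1 [rowSpaceProj]
  rw [Matrix.mul_assoc, mul_rowSpaceProj hX, rowSpaceProj]

theorem mulVec_one_sub_rowSpaceProj_mulVec [DecidableEq n] (hX : IsUnit (X * Xᵀ).det)
    (θ : n → R) :
    X *ᵥ ((1 - rowSpaceProj X) *ᵥ θ) = 0 := by
  rw [mulVec_mulVec, Matrix.mul_sub, Matrix.mul_one, mul_rowSpaceProj hX, sub_self, zero_mulVec]

end Projection

theorem integral_dotProduct_sq {ι : Type*} [Fintype ι] {ν : Measure (ι → ℝ)}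
    {S : Matrix ι ι ℝ} (hint : ∀ i j, Integrable (fun x : ι → ℝ => x i * x j) ν)
    (hcov : ∀ i j, ∫ x : ι → ℝ, x i * x j ∂ν = S i j) (v : ι → ℝ) :
    ∫ x, (v ⬝ᵥ x) ^ 2 ∂ν = v ⬝ᵥ S *ᵥ v := by
  have hexpand : ∀ x : ι → ℝ, (v ⬝ᵥ x) ^ 2 = ∑ i, ∑ j, v i * v j * (x i * x j) := fun x => by
    simp only [sq, dotProduct, Finset.sum_mul_sum]
    exact Finset.sum_congr rfl fun i _ => Finset.sum_congr rfl fun j _ => by ring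
  simp only [hexpand]
  rw [integral_finsetSum _ fun i _ => integrable_finsetSum _ fun j _ => (hint i j).const_mul _]
  refine Finset.sum_congr rfl fun i _ => ?_
  rw [integral_finsetSum _ fun j _ => (hint i j).const_mul _, mulVec, dotProduct, Finset.mul_sum]
  exact Finset.sum_congr rfl fun j _ => by rw [integral_const_mul, hcov]; ring

theorem dotProduct_mulVec_le_mul_opNorm {ι : Type*} [Fintype ι] [DecidableEq ι]
    (A : Matrix ι ι ℝ) (v : ι → ℝ) :
    v ⬝ᵥ A *ᵥ v ≤ (v ⬝ᵥ v) * ‖toEuclideanCLM (𝕜 := ℝ) A‖ := by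
  set u := WithLp.toLp 2 v
  have hnorm : ‖u‖ ^ 2 = v ⬝ᵥ v := by
    rw [← real_inner_self_eq_norm_sq, EuclideanSpace.inner_toLp_toLp, star_trivial]
  calc v ⬝ᵥ A *ᵥ v = inner ℝ u (toEuclideanCLM (𝕜 := ℝ) A u) :=
      (inner_toEuclideanCLM A u u).symm
    _ ≤ ‖u‖ * (‖toEuclideanCLM (𝕜 := ℝ) A‖ * ‖u‖) :=
      (real_inner_le_norm _ _).trans (by gcongr; exact ContinuousLinearMap.le_opNorm _ _)
    _ = (v ⬝ᵥ v) * ‖toEuclideanCLM (𝕜 := ℝ) A‖ := by rw [← hnorm]; ring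

theorem min_norm_interpolant_bias_general
    {n d : ℕ}
    (X : Matrix (Fin n) (Fin d) ℝ) (hX : IsUnit (X * Xᵀ).det)
    (θs : Fin d → ℝ) (S : Matrix (Fin d) (Fin d) ℝ)
    (ν : Measure (Fin d → ℝ))
    (hint : ∀ i j, Integrable (fun x : Fin d → ℝ => x i * x j) ν)
    (hcov : ∀ i j, ∫ x : Fin d → ℝ, x i * x j ∂ν = S i j) :
    (∫ x : Fin d → ℝ,
        ((θs ⬝ᵥ x) - ((Xᵀ * (X * Xᵀ)⁻¹ * X).mulVec θs ⬝ᵥ x)) ^ 2 ∂ν)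
      = (((1 : Matrix (Fin d) (Fin d) ℝ) - Xᵀ * (X * Xᵀ)⁻¹ * X).mulVec θs) ⬝ᵥ
          (S.mulVec ((((1 : Matrix (Fin d) (Fin d) ℝ) - Xᵀ * (X * Xᵀ)⁻¹ * X)).mulVec θs)) ∧
    (∫ x : Fin d → ℝ,
        ((θs ⬝ᵥ x) - ((Xᵀ * (X * Xᵀ)⁻¹ * X).mulVec θs ⬝ᵥ x)) ^ 2 ∂ν)
      ≤ (∑ i, (θs i) ^ 2) *
          ‖Matrix.toEuclideanCLM (𝕜 := ℝ) (S - (n : ℝ)⁻¹ • (Xᵀ * X))‖ := by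
  rw [← rowSpaceProj]
  set v := (1 - rowSpaceProj X) *ᵥ θs with hv
  have hresidual (x : Fin d → ℝ) : θs ⬝ᵥ x - rowSpaceProj X *ᵥ θs ⬝ᵥ x = v ⬝ᵥ x := by
    rw [hv, sub_mulVec, one_mulVec, sub_dotProduct]
  have hbias : ∫ x, (θs ⬝ᵥ x - rowSpaceProj X *ᵥ θs ⬝ᵥ x) ^ 2 ∂ν = v ⬝ᵥ S *ᵥ v := by
    simp only [hresidual]
    exact integral_dotProduct_sq hint hcov v
  refine ⟨hbias, ?_⟩
  have hgram : (Xᵀ * X) *ᵥ v = 0 := by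
    rw [← mulVec_mulVec, mulVec_one_sub_rowSpaceProj_mulVec hX, mulVec_zero]
  have hcontract : v ⬝ᵥ v ≤ ∑ i, θs i ^ 2 := by
    have hsymm : (1 - rowSpaceProj X)ᵀ = 1 - rowSpaceProj X := by
      rw [transpose_sub, transpose_one, rowSpaceProj_transpose]
    simpa only [dotProduct, sq] using
      mulVec_dotProduct_mulVec_self_le hsymm (isIdempotentElem_rowSpaceProj hX).one_sub θs
  calc _ = v ⬝ᵥ (S - (n : ℝ)⁻¹ • (Xᵀ * X)) *ᵥ v := by
        rw [hbias, sub_mulVec, smul_mulVec, hgram, smul_zero, sub_zero]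
    _ ≤ (v ⬝ᵥ v) * ‖toEuclideanCLM (𝕜 := ℝ) (S - (n : ℝ)⁻¹ • (Xᵀ * X))‖ :=
      dotProduct_mulVec_le_mul_opNorm _ v
    _ ≤ _ := by gcongr

/-- Bias of the minimum-norm linear interpolant `θ̂ = X† y` when `n < d` and `X Xᵀ` is
invertible: with `P⊥ = I - Xᵀ (X Xᵀ)⁻¹ X` the projector onto the kernel of `X`,
`Σ` the population covariance of `x` (mean zero) and `θ*` the true parameter,
`BIAS² = E_x(⟨θ*, x⟩ - ⟨E_y θ̂, x⟩)² = ‖Σ^{1/2} P⊥ θ*‖₂² = (P⊥θ*)ᵀ Σ (P⊥θ*)`, and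
moreover `BIAS² ≤ ‖θ*‖₂² ⬝ ‖Σ - Σ̂‖` where `Σ̂ = (1/n) Xᵀ X` and `‖·‖` is the
`ℓ₂` operator norm. -/
theorem min_norm_interpolant_bias
    {n d : ℕ} (hnd : n < d)
    (X : Matrix (Fin n) (Fin d) ℝ) (hX : IsUnit (X * Xᵀ).det)
    (θs : Fin d → ℝ) (S : Matrix (Fin d) (Fin d) ℝ) (hS : S.PosSemidef)
    (ν : Measure (Fin d → ℝ)) [IsProbabilityMeasure ν]
    (hint : ∀ i j, Integrable (fun x : Fin d → ℝ => x i * x j) ν)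
    (hmean : ∀ i, ∫ x : Fin d → ℝ, x i ∂ν = 0)
    (hcov : ∀ i j, ∫ x : Fin d → ℝ, x i * x j ∂ν = S i j) :
    (∫ x : Fin d → ℝ,
        ((θs ⬝ᵥ x) - ((Xᵀ * (X * Xᵀ)⁻¹ * X).mulVec θs ⬝ᵥ x)) ^ 2 ∂ν)
      = (((1 : Matrix (Fin d) (Fin d) ℝ) - Xᵀ * (X * Xᵀ)⁻¹ * X).mulVec θs) ⬝ᵥ
          (S.mulVec ((((1 : Matrix (Fin d) (Fin d) ℝ) - Xᵀ * (X * Xᵀ)⁻¹ * X)).mulVec θs)) ∧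
    (∫ x : Fin d → ℝ,
        ((θs ⬝ᵥ x) - ((Xᵀ * (X * Xᵀ)⁻¹ * X).mulVec θs ⬝ᵥ x)) ^ 2 ∂ν)
      ≤ (∑ i, (θs i) ^ 2) *
          ‖Matrix.toEuclideanCLM (𝕜 := ℝ) (S - (n : ℝ)⁻¹ • (Xᵀ * X))‖ :=
  min_norm_interpolant_bias_general X hX θs S ν hint hcov
end

section
/- Deterministic variance bound for kernel ridgeless regression: for any X ∈ ℝ^{n×d}, any positive semidefinite Σ ∈ ℝ^{d×d} with eigenvalues λ_1 ≥ ... ≥ λ_d, any γ > 0, and any k < d, if n ≤ c·d for an absolute constant c then tr((XX^T + dγ I_n)^{-2} X Σ X^T) ≤ (C/γ)·(λ_1 k / n + λ_{k+1}) for an absolute constant C. -/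
open Matrix

/-!
Put `A = X Xᵀ + r I` with `r = dγ` and `C = A⁻¹ X`. Since `A` is symmetric, the quantity is
`tr (S Cᵀ C) = ∑ᵢ λᵢ ‖C uᵢ‖²`, and everything follows from the identity
`⟪y, A y⟫ = ‖Xᵀ y‖² + r ‖y‖²` together with `⟪a, b⟫ - ‖a‖² ≤ ‖b‖² / 4`:
for `A y = X u` it gives `‖C u‖² ≤ ‖u‖² / (4r)`, and for `y` a row of `A⁻¹` it gives that every
row of `C` has squared norm at most `1 / (4r)`, so `∑ᵢ ‖C uᵢ‖² = ‖C‖²_F ≤ n / (4r)`.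
Bounding the first `k` eigenvalues by `λ₁` and the others by `λ_{k+1}` yields
`(k λ₁ + n λ_{k+1}) / (4dγ)`, which is the claim with `c = 1` and `C = 1/4`.
-/

lemma dotProduct_sub_dotProduct_self_le {ι 𝕜 : Type*} [Fintype ι] [Field 𝕜] [LinearOrder 𝕜]
    [IsStrictOrderedRing 𝕜] (a b : ι → 𝕜) : a ⬝ᵥ b - a ⬝ᵥ a ≤ b ⬝ᵥ b / 4 := by
  have h : 0 ≤ (a - (2 : 𝕜)⁻¹ • b) ⬝ᵥ (a - (2 : 𝕜)⁻¹ • b) :=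
    Finset.sum_nonneg fun i _ => mul_self_nonneg _
  simp only [sub_dotProduct, dotProduct_sub, smul_dotProduct, dotProduct_smul, smul_eq_mul,
    dotProduct_comm b a] at h
  linarith

lemma dotProduct_transpose_mul_self_mulVec {m n R : Type*} [Fintype m] [Fintype n] [CommSemiring R]
    (C : Matrix m n R) (u : n → R) : u ⬝ᵥ (Cᵀ * C) *ᵥ u = C *ᵥ u ⬝ᵥ C *ᵥ u := by
  rw [← mulVec_mulVec, dotProduct_mulVec, vecMul_transpose]

lemma trace_transpose_mul_self {m n R : Type*} [Fintype m] [Fintype n] [CommSemiring R]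
    (C : Matrix m n R) : trace (Cᵀ * C) = ∑ j, C j ⬝ᵥ C j := by
  rw [trace_mul_comm]
  rfl

lemma IsSymm.trace_mul_self_mul_mul_mul_transpose {m n R : Type*} [Fintype m] [Fintype n]
    [CommSemiring R] {A : Matrix m m R} (hA : A.IsSymm) (X : Matrix m n R) (S : Matrix n n R) :
    trace (A * A * X * S * Xᵀ) = trace (S * ((A * X)ᵀ * (A * X))) := by
  rw [trace_mul_comm S, trace_mul_comm, transpose_mul, hA.eq]
  simp only [Matrix.mul_assoc]

lemma isSymm_mul_transpose_add_smul {m n R : Type*} [Fintype n] [DecidableEq m] [CommSemiring R]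
    (X : Matrix m n R) (r : R) : (X * Xᵀ + r • 1).IsSymm := by
  simp only [IsSymm, transpose_add, transpose_mul, transpose_transpose, transpose_smul,
    transpose_one]

section Ridge

variable {m n : Type*} [Fintype m] [Fintype n] [DecidableEq m] (X : Matrix m n ℝ) {r : ℝ}

lemma dotProduct_mul_transpose_add_smul_mulVec (y : m → ℝ) :
    y ⬝ᵥ (X * Xᵀ + r • 1) *ᵥ y = (y ᵥ* X) ⬝ᵥ (y ᵥ* X) + r * (y ⬝ᵥ y) := by
  rw [add_mulVec, ← mulVec_mulVec, smul_mulVec, one_mulVec, dotProduct_add, dotProduct_mulVec,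
    mulVec_transpose, dotProduct_smul, smul_eq_mul]

lemma mul_dotProduct_self_le_of_mulVec_eq {y : m → ℝ} {u : n → ℝ}
    (hy : (X * Xᵀ + r • 1) *ᵥ y = X *ᵥ u) : r * (y ⬝ᵥ y) ≤ u ⬝ᵥ u / 4 := by
  have h := dotProduct_mul_transpose_add_smul_mulVec X (r := r) y
  rw [hy, dotProduct_mulVec] at h
  linarith [dotProduct_sub_dotProduct_self_le (y ᵥ* X) u]

lemma mul_vecMul_dotProduct_self_le_of_vecMul_eq {y v : m → ℝ}
    (hy : y ᵥ* (X * Xᵀ + r • 1) = v) : r * ((y ᵥ* X) ⬝ᵥ (y ᵥ* X)) ≤ v ⬝ᵥ v / 4 := by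
  have h := dotProduct_mul_transpose_add_smul_mulVec X (r := r) y
  rw [dotProduct_mulVec, hy] at h
  have h' := dotProduct_sub_dotProduct_self_le (r • y) v
  simp only [smul_dotProduct, dotProduct_smul, smul_eq_mul] at h'
  rw [dotProduct_comm v y] at h
  linear_combination (-r) * h + h'

lemma isUnit_mul_transpose_add_smul (hr : 0 < r) : IsUnit (X * Xᵀ + r • 1) :=
  (PosDef.posSemidef_add (posSemidef_self_mul_conjTranspose X) (PosDef.one.smul hr)).isUnit

lemma inv_mul_mulVec_dotProduct_self_le (hr : 0 < r) (u : n → ℝ) :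
    ((X * Xᵀ + r • 1)⁻¹ * X) *ᵥ u ⬝ᵥ ((X * Xᵀ + r • 1)⁻¹ * X) *ᵥ u ≤ u ⬝ᵥ u / (4 * r) := by
  have h := mul_dotProduct_self_le_of_mulVec_eq X (y := ((X * Xᵀ + r • 1)⁻¹ * X) *ᵥ u) <| by
    rw [← mulVec_mulVec, mulVec_mulVec, mul_nonsing_inv _
      ((isUnit_iff_isUnit_det _).mp (isUnit_mul_transpose_add_smul X hr)), one_mulVec]
  rw [le_div_iff₀ (by positivity)]
  linarith

lemma inv_mul_row_dotProduct_self_le (hr : 0 < r) (j : m) :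
    ((X * Xᵀ + r • 1)⁻¹ * X : Matrix m n ℝ) j ⬝ᵥ ((X * Xᵀ + r • 1)⁻¹ * X : Matrix m n ℝ) j
      ≤ 1 / (4 * r) := by
  have h := mul_vecMul_dotProduct_self_le_of_vecMul_eq X (r := r)
    (y := ((X * Xᵀ + r • 1)⁻¹ : Matrix m m ℝ) j) (v := (1 : Matrix m m ℝ) j) <| by
    rw [← mul_apply_eq_vecMul, nonsing_inv_mul _
      ((isUnit_iff_isUnit_det _).mp (isUnit_mul_transpose_add_smul X hr))]
  rw [mul_apply_eq_vecMul, le_div_iff₀ (by positivity)]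
  have hj : (1 : Matrix m m ℝ) j ⬝ᵥ (1 : Matrix m m ℝ) j = 1 := by simp [dotProduct, one_apply]
  linarith

lemma trace_transpose_mul_self_inv_mul_le (hr : 0 < r) :
    trace (((X * Xᵀ + r • 1)⁻¹ * X)ᵀ * ((X * Xᵀ + r • 1)⁻¹ * X)) ≤ Fintype.card m / (4 * r) := by
  rw [trace_transpose_mul_self]
  calc _ ≤ ∑ _j : m, 1 / (4 * r) :=
        Finset.sum_le_sum fun j _ => inv_mul_row_dotProduct_self_le X hr j
    _ = Fintype.card m / (4 * r) := by simp [div_eq_mul_inv]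

end Ridge

section Eigenbasis

variable {ι R : Type*} [Fintype ι] [DecidableEq ι] [CommRing R] {u : ι → ι → R}

lemma transpose_of_mul_of_eq_one (horth : ∀ i j, u i ⬝ᵥ u j = if i = j then 1 else 0) :
    (of u)ᵀ * of u = 1 :=
  mul_eq_one_comm.mp <| ext fun i j => by simpa [mul_apply, one_apply, dotProduct] using horth i j

lemma trace_mul_eq_sum_mul_dotProduct_mulVec {S : Matrix ι ι R} {lam : ι → R}
    (horth : ∀ i j, u i ⬝ᵥ u j = if i = j then 1 else 0) (heig : ∀ i, S *ᵥ u i = lam i • u i)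
    (B : Matrix ι ι R) : trace (S * B) = ∑ i, lam i * (u i ⬝ᵥ B *ᵥ u i) := by
  have hcols : S * (of u)ᵀ = (of u)ᵀ * diagonal lam := ext fun i j => by
    rw [mul_diagonal]
    simpa [mul_apply, mulVec, dotProduct, mul_comm] using congrFun (heig j) i
  have hS : S = (of u)ᵀ * diagonal lam * of u := by
    rw [← hcols, Matrix.mul_assoc, transpose_of_mul_of_eq_one horth, Matrix.mul_one]
  rw [hS, Matrix.mul_assoc, Matrix.mul_assoc, trace_mul_comm, Matrix.mul_assoc, trace_mul_comm,
    trace_mul_comm]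
  simp only [trace, diag, diagonal_mul]
  refine Finset.sum_congr rfl fun i _ => ?_
  rw [mul_apply', mul_apply_eq_vecMul, ← dotProduct_mulVec]
  rfl

lemma sum_dotProduct_mulVec_eq_trace (horth : ∀ i j, u i ⬝ᵥ u j = if i = j then 1 else 0)
    (B : Matrix ι ι R) : ∑ i, u i ⬝ᵥ B *ᵥ u i = trace B := by
  simpa using (trace_mul_eq_sum_mul_dotProduct_mulVec (S := 1) (lam := 1) horth (by simp) B).symm

end Eigenbasis

lemma sum_mul_le_of_antitone {d k : ℕ} (hk : k < d) {lam b : Fin d → ℝ} {a β : ℝ}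
    (hmono : Antitone lam) (ha : ∀ i, lam i ≤ a) (hlam : 0 ≤ lam ⟨k, hk⟩)
    (hb0 : ∀ i, 0 ≤ b i) (hb : ∀ i, b i ≤ β) {B : ℝ} (hB : ∑ i, b i ≤ B) :
    ∑ i, lam i * b i ≤ k * (a * β) + lam ⟨k, hk⟩ * B := by
  rw [← Finset.sum_filter_add_sum_filter_not Finset.univ (fun i : Fin d => i.val < k)]
  gcongr ?_ + ?_
  · calc ∑ i : Fin d with i.val < k, lam i * b i ≤ ∑ i : Fin d with i.val < k, a * β :=
          Finset.sum_le_sum fun i _ => mul_le_mul (ha i) (hb i) (hb0 i) (hlam.trans (ha _))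
      _ = k * (a * β) := by simp [Fin.card_filter_val_lt, hk.le]
  · calc ∑ i : Fin d with ¬i.val < k, lam i * b i
          ≤ ∑ i : Fin d with ¬i.val < k, lam ⟨k, hk⟩ * b i :=
          Finset.sum_le_sum fun i hi => mul_le_mul_of_nonneg_right
            (hmono (by simpa [Fin.le_def] using hi)) (hb0 i)
      _ ≤ lam ⟨k, hk⟩ * B := by
          rw [← Finset.mul_sum]
          refine mul_le_mul_of_nonneg_left (le_trans ?_ hB) hlam
          exact Finset.sum_le_sum_of_subset_of_nonneg (Finset.filter_subset _ _) fun i _ _ => hb0 i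

lemma mul_add_mul_div_four_mul_le {n d k : ℕ} {a l γ : ℝ} (hγ : 0 < γ) (hn : 0 < n)
    (hnd : (n : ℝ) ≤ d) (ha : 0 ≤ a) (hl : 0 ≤ l) :
    k * (a * (1 / (4 * (d * γ)))) + l * (n / (4 * (d * γ))) ≤ 1 / 4 / γ * (a * k / n + l) := by
  have hn' : (0 : ℝ) < n := by exact_mod_cast hn
  have hd : (0 : ℝ) < d := hn'.trans_le hnd
  calc k * (a * (1 / (4 * (d * γ)))) + l * (n / (4 * (d * γ)))
      = 1 / 4 / γ * (a * k / d + l * (n / d)) := by field_simp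
    _ ≤ 1 / 4 / γ * (a * k / n + l) := by
      gcongr
      exact mul_le_of_le_one_right hl ((div_le_one hd).mpr hnd)

/-- Deterministic variance bound for kernel ridgeless regression: there are absolute
constants `c, C > 0` such that for any `X ∈ ℝ^{n×d}`, any PSD `Σ` with orthonormal
eigenbasis `u` and nonincreasing eigenvalues `λ₁ ≥ ... ≥ λ_d ≥ 0`, any `γ > 0` and
any `k < d`, if `n ≤ c d` then
`tr((X Xᵀ + dγ I)⁻² X Σ Xᵀ) ≤ (C/γ) (λ₁ k / n + λ_{k+1})`. -/
theorem kernel_ridgeless_variance_bound :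
    ∃ c C : ℝ, 0 < c ∧ 0 < C ∧
      ∀ (n d : ℕ) (hn : 0 < n) (hnd : (n : ℝ) ≤ c * d)
        (X : Matrix (Fin n) (Fin d) ℝ)
        (S : Matrix (Fin d) (Fin d) ℝ) (hS : S.PosSemidef)
        (lam : Fin d → ℝ) (hmono : Antitone lam) (hnonneg : ∀ i, 0 ≤ lam i)
        (u : Fin d → Fin d → ℝ)
        (horth : ∀ i j, u i ⬝ᵥ u j = if i = j then (1 : ℝ) else 0)
        (heig : ∀ i, S.mulVec (u i) = lam i • u i)
        (γ : ℝ) (hγ : 0 < γ) (k : ℕ) (hk : k < d),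
        Matrix.trace
            ((X * Xᵀ + ((d : ℝ) * γ) • (1 : Matrix (Fin n) (Fin n) ℝ))⁻¹ *
              (X * Xᵀ + ((d : ℝ) * γ) • (1 : Matrix (Fin n) (Fin n) ℝ))⁻¹ *
              X * S * Xᵀ)
          ≤ C / γ * (lam ⟨0, Nat.lt_of_le_of_lt (Nat.zero_le k) hk⟩ * k / n
              + lam ⟨k, hk⟩) := by
  refine ⟨1, 1 / 4, one_pos, by norm_num, ?_⟩
  intro n d hn hnd X S hS lam hmono hnonneg u horth heig γ hγ k hk
  rw [one_mul] at hnd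
  set r : ℝ := d * γ
  have hr : 0 < r := mul_pos (by exact_mod_cast Nat.zero_lt_of_lt hk) hγ
  set C : Matrix (Fin n) (Fin d) ℝ := (X * Xᵀ + r • 1)⁻¹ * X
  have hquad : ∀ i, u i ⬝ᵥ (Cᵀ * C) *ᵥ u i ≤ 1 / (4 * r) := fun i => by
    simpa [dotProduct_transpose_mul_self_mulVec, horth] using
      inv_mul_mulVec_dotProduct_self_le X hr (u i)
  have hquad_nonneg : ∀ i, 0 ≤ u i ⬝ᵥ (Cᵀ * C) *ᵥ u i := fun i => by
    rw [dotProduct_transpose_mul_self_mulVec]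
    exact Finset.sum_nonneg fun _ _ => mul_self_nonneg _
  have hsum : ∑ i, u i ⬝ᵥ (Cᵀ * C) *ᵥ u i ≤ n / (4 * r) := by
    have h := trace_transpose_mul_self_inv_mul_le X hr
    rwa [Fintype.card_fin, ← sum_dotProduct_mulVec_eq_trace horth] at h
  calc trace ((X * Xᵀ + r • 1)⁻¹ * (X * Xᵀ + r • 1)⁻¹ * X * S * Xᵀ)
      = ∑ i, lam i * (u i ⬝ᵥ (Cᵀ * C) *ᵥ u i) := by
        rw [IsSymm.trace_mul_self_mul_mul_mul_transpose (isSymm_mul_transpose_add_smul X r).inv,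
          trace_mul_eq_sum_mul_dotProduct_mulVec horth heig]
    _ ≤ k * (lam ⟨0, _⟩ * (1 / (4 * r))) + lam ⟨k, hk⟩ * (n / (4 * r)) :=
        sum_mul_le_of_antitone hk hmono (fun i => hmono (Nat.zero_le i.val)) (hnonneg _)
          hquad_nonneg hquad hsum
    _ ≤ _ := mul_add_mul_div_four_mul_le hγ hn hnd (hnonneg _) (hnonneg _)
end

section
/- Sherman–Morrison quadratic-form bound: let A be a symmetric positive definite n×n matrix of the form A = dγ I_n + B with B positive semidefinite, and let v ∈ ℝ^n. Then ‖(A + v v^T)^{-1} v‖₂² = (v^T A^{-2} v)/(1 + v^T A^{-1} v)² ≤ 1/(4 d γ). -/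
/-!
Sherman–Morrison gives `(A + v vᵀ)⁻¹ v = A⁻¹ v / (1 + t)` with `t = vᵀ A⁻¹ v ≥ 0`, which is the
identity. Writing `u = A⁻¹ v`, the splitting `A = dγ I + B` with `B ⪰ 0` gives
`dγ ‖u‖² ≤ uᵀ A u = t`, so the squared norm is at most `t / (dγ (1 + t)²) ≤ 1 / (4 dγ)`,
since `(1 + t)² - 4t = (1 - t)² ≥ 0`.
-/

open Matrix

lemma div_one_add_sq_le_one_div_four {t : ℝ} (ht : 0 ≤ t) : t / (1 + t) ^ 2 ≤ 1 / 4 := by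
  rw [div_le_div_iff₀ (by positivity) (by norm_num)]
  nlinarith [sq_nonneg (1 - t)]

namespace Matrix

variable {m : Type*}

lemma IsSymm.dotProduct_mul_self_mulVec [Fintype m] {R : Type*} [CommSemiring R]
    {S : Matrix m m R} (hS : S.IsSymm) (v : m → R) :
    v ⬝ᵥ (S * S) *ᵥ v = (S *ᵥ v) ⬝ᵥ (S *ᵥ v) := by
  rw [← mulVec_mulVec, dotProduct_mulVec, ← mulVec_transpose, hS.eq]

variable [DecidableEq m]

lemma posDef_smul_one_add {c : ℝ} (hc : 0 < c) {B : Matrix m m ℝ} (hB : B.PosSemidef) :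
    (c • 1 + B).PosDef :=
  (PosDef.one.smul hc).add_posSemidef hB

variable [Fintype m]

section ShermanMorrison

variable {K : Type*} [Field K]

lemma add_vecMulVec_mulVec_inv_mulVec {A : Matrix m m K} (hA : IsUnit A.det) (u w : m → K) :
    (A + vecMulVec u w) *ᵥ (A⁻¹ *ᵥ u) = (1 + w ⬝ᵥ A⁻¹ *ᵥ u) • u := by
  rw [add_mulVec, mulVec_mulVec, mul_nonsing_inv A hA, one_mulVec, vecMulVec_mulVec,
    op_smul_eq_smul, add_smul, one_smul]

theorem inv_add_vecMulVec_mulVec {A : Matrix m m K} (hA : IsUnit A.det) {u w : m → K}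
    (hM : IsUnit (A + vecMulVec u w).det) :
    (A + vecMulVec u w)⁻¹ *ᵥ u = (1 + w ⬝ᵥ A⁻¹ *ᵥ u)⁻¹ • A⁻¹ *ᵥ u := by
  have key : A⁻¹ *ᵥ u = (1 + w ⬝ᵥ A⁻¹ *ᵥ u) • (A + vecMulVec u w)⁻¹ *ᵥ u := by
    rw [← mulVec_smul, ← add_vecMulVec_mulVec_inv_mulVec hA, mulVec_mulVec,
      nonsing_inv_mul _ hM, one_mulVec]
  by_cases hc : 1 + w ⬝ᵥ A⁻¹ *ᵥ u = 0
  · have hu : u = 0 := by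
      rw [hc, zero_smul] at key
      rw [← one_mulVec u, ← mul_nonsing_inv A hA, ← mulVec_mulVec, key, mulVec_zero]
    simp [hu]
  · exact (eq_inv_smul_iff₀ hc).mpr key.symm

end ShermanMorrison

lemma sum_sq_inv_add_vecMulVec_self_mulVec {A : Matrix m m ℝ} (hA : A.PosDef) (v : m → ℝ) :
    ∑ i, ((A + vecMulVec v v)⁻¹ *ᵥ v) i ^ 2 =
      (A⁻¹ *ᵥ v ⬝ᵥ A⁻¹ *ᵥ v) / (1 + v ⬝ᵥ A⁻¹ *ᵥ v) ^ 2 := by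
  have hM : (A + vecMulVec v v).PosDef := by
    simpa using hA.add_posSemidef (posSemidef_vecMulVec_self_star v)
  rw [inv_add_vecMulVec_mulVec (isUnit_iff_isUnit_det A |>.mp hA.isUnit)
      (isUnit_iff_isUnit_det _ |>.mp hM.isUnit), div_eq_inv_mul, ← inv_pow]
  simp only [Pi.smul_apply, smul_eq_mul, dotProduct, Finset.mul_sum]
  exact Finset.sum_congr rfl fun i _ => by ring

variable {c : ℝ} {B : Matrix m m ℝ}

lemma mul_dotProduct_self_le_dotProduct_smul_one_add_mulVec (hB : B.PosSemidef) (x : m → ℝ) :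
    c * (x ⬝ᵥ x) ≤ x ⬝ᵥ (c • 1 + B) *ᵥ x := by
  have := hB.dotProduct_mulVec_nonneg x
  rw [star_trivial] at this
  rw [add_mulVec, dotProduct_add, smul_mulVec, one_mulVec, dotProduct_smul, smul_eq_mul]
  linarith

lemma mul_dotProduct_inv_mulVec_self_le (hc : 0 < c) (hB : B.PosSemidef) (v : m → ℝ) :
    c * ((c • 1 + B)⁻¹ *ᵥ v ⬝ᵥ (c • 1 + B)⁻¹ *ᵥ v) ≤ v ⬝ᵥ (c • 1 + B)⁻¹ *ᵥ v := by
  have hA := isUnit_iff_isUnit_det _ |>.mp (posDef_smul_one_add hc hB).isUnit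
  calc c * ((c • 1 + B)⁻¹ *ᵥ v ⬝ᵥ (c • 1 + B)⁻¹ *ᵥ v)
      ≤ (c • 1 + B)⁻¹ *ᵥ v ⬝ᵥ (c • 1 + B) *ᵥ (c • 1 + B)⁻¹ *ᵥ v :=
        mul_dotProduct_self_le_dotProduct_smul_one_add_mulVec hB _
    _ = v ⬝ᵥ (c • 1 + B)⁻¹ *ᵥ v := by
        rw [mulVec_mulVec, mul_nonsing_inv _ hA, one_mulVec, dotProduct_comm]

lemma sum_sq_inv_smul_one_add_add_vecMulVec_self_mulVec_le (hc : 0 < c) (hB : B.PosSemidef)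
    (v : m → ℝ) : ∑ i, ((c • 1 + B + vecMulVec v v)⁻¹ *ᵥ v) i ^ 2 ≤ 1 / (4 * c) := by
  have hA := posDef_smul_one_add hc hB
  set u := (c • 1 + B)⁻¹ *ᵥ v
  set t := v ⬝ᵥ (c • 1 + B)⁻¹ *ᵥ v
  have ht : 0 ≤ t := by simpa using hA.inv.posSemidef.dotProduct_mulVec_nonneg v
  have hu : u ⬝ᵥ u ≤ t / c := (le_div_iff₀' hc).mpr (mul_dotProduct_inv_mulVec_self_le hc hB v)
  rw [sum_sq_inv_add_vecMulVec_self_mulVec hA]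
  calc (u ⬝ᵥ u) / (1 + t) ^ 2 ≤ t / c / (1 + t) ^ 2 := by gcongr
    _ = t / (1 + t) ^ 2 / c := by ring
    _ ≤ 1 / 4 / c := div_le_div_of_nonneg_right (div_one_add_sq_le_one_div_four ht) hc.le
    _ = 1 / (4 * c) := by ring

end Matrix

/-- Sherman–Morrison quadratic-form bound: for `A = dγ I + B` with `B ⪰ 0`, `γ > 0`,
`d ≥ 1`, and any vector `v`,
`‖(A + v vᵀ)⁻¹ v‖₂² = (vᵀ A⁻² v) / (1 + vᵀ A⁻¹ v)² ≤ 1 / (4 d γ)`. -/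
theorem sherman_morrison_quadratic_form_bound
    {n : ℕ} (d : ℕ) (hd : 1 ≤ d) (γ : ℝ) (hγ : 0 < γ)
    (B : Matrix (Fin n) (Fin n) ℝ) (hB : B.PosSemidef) (v : Fin n → ℝ) :
    (∑ i, ((((((d : ℝ) * γ) • (1 : Matrix (Fin n) (Fin n) ℝ) + B)
        + Matrix.vecMulVec v v)⁻¹).mulVec v i) ^ 2)
      = (v ⬝ᵥ ((((d : ℝ) * γ) • (1 : Matrix (Fin n) (Fin n) ℝ) + B)⁻¹ *
          (((d : ℝ) * γ) • (1 : Matrix (Fin n) (Fin n) ℝ) + B)⁻¹).mulVec v)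
        / (1 + v ⬝ᵥ ((((d : ℝ) * γ) • (1 : Matrix (Fin n) (Fin n) ℝ) + B)⁻¹).mulVec v) ^ 2
    ∧ (∑ i, ((((((d : ℝ) * γ) • (1 : Matrix (Fin n) (Fin n) ℝ) + B)
        + Matrix.vecMulVec v v)⁻¹).mulVec v i) ^ 2)
      ≤ 1 / (4 * d * γ) := by
  have hdγ : 0 < (d : ℝ) * γ := mul_pos (by exact_mod_cast hd) hγ
  have hA := posDef_smul_one_add hdγ hB
  have hAinv_symm := isHermitian_iff_isSymm.mp hA.inv.isHermitian
  refine ⟨?_, ?_⟩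
  · rw [sum_sq_inv_add_vecMulVec_self_mulVec hA, hAinv_symm.dotProduct_mul_self_mulVec]
  · rw [mul_assoc]
    exact sum_sq_inv_smul_one_add_add_vecMulVec_self_mulVec_le hdγ hB v
end

section
/- Lower bound on the effective regularization: let λ* > 0 solve n(1 − γ/λ*) = ∑_{i=1}^d λ_i/(λ_i + λ*), where λ_1 ≥ ... ≥ λ_d ≥ 0 are the eigenvalues of Σ and γ > 0. Fix k < d and c* > 0, and suppose (∑_{i>k} λ_i)/λ_{k+1} + nγ/(c* λ_{k+1}) ≥ (1 + c*) n. Then λ* ≥ γ + (c*/(1+c*)) (1/n) ∑_{i>k} λ_i. -/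
/-- Lower bound on the effective regularization: if `λ* > 0` solves
`n (1 - γ/λ*) = ∑ᵢ λᵢ / (λᵢ + λ*)` with eigenvalues `λ₁ ≥ ... ≥ λ_d ≥ 0`, `γ > 0`,
and for some `k < d` and `c* > 0` one has
`(∑_{i>k} λᵢ)/λ_{k+1} + n γ/(c* λ_{k+1}) ≥ (1 + c*) n`, then
`λ* ≥ γ + (c*/(1+c*)) (1/n) ∑_{i>k} λᵢ`. -/
theorem effective_regularization_lower_bound
    {d : ℕ} (lam : Fin d → ℝ) (hmono : Antitone lam) (hnonneg : ∀ i, 0 ≤ lam i)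
    (γ : ℝ) (hγ : 0 < γ) (n : ℕ) (hn : 1 ≤ n)
    (lamStar : ℝ) (hpos : 0 < lamStar)
    (hfix : (n : ℝ) * (1 - γ / lamStar) = ∑ i, lam i / (lam i + lamStar))
    (k : ℕ) (hk : k < d) (cs : ℝ) (hcs : 0 < cs)
    (hcond : (∑ i ∈ Finset.univ.filter (fun i : Fin d => k ≤ (i : ℕ)), lam i)
          / lam ⟨k, hk⟩ + (n : ℝ) * γ / (cs * lam ⟨k, hk⟩)
        ≥ (1 + cs) * n) :
    lamStar ≥ γ + (cs / (1 + cs)) * ((1 : ℝ) / n) *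
      ∑ i ∈ Finset.univ.filter (fun i : Fin d => k ≤ (i : ℕ)), lam i := by
  set S := Finset.univ.filter (fun i : Fin d => k ≤ (i : ℕ)) with hS
  set T := ∑ i ∈ S, lam i with hTdef
  set lamk := lam ⟨k, hk⟩ with hlamkdef
  have hn' : (0:ℝ) < n := by exact_mod_cast hn
  have hcs1 : (0:ℝ) < 1 + cs := by linarith
  have hT0 : 0 ≤ T := Finset.sum_nonneg fun i _ => hnonneg i
  -- lamk > 0
  have hlamk : 0 < lamk := by
    rcases lt_or_eq_of_le (hnonneg ⟨k, hk⟩) with h | h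
    · exact h
    · exfalso
      have h0 : lamk = 0 := by rw [hlamkdef, ← h]
      rw [h0] at hcond
      simp at hcond
      nlinarith
  -- all tail eigenvalues ≤ lamk
  have hle : ∀ i ∈ S, lam i ≤ lamk := by
    intro i hi
    rw [hS, Finset.mem_filter] at hi
    exact hmono (Fin.le_def.mpr hi.2)
  -- cleared condition
  have hcond' : (1 + cs) * n * (cs * lamk) ≤ cs * T + n * γ := by
    have h1 : (1 + cs) * n * (cs * lamk) ≤ (T / lamk + n * γ / (cs * lamk)) * (cs * lamk) :=
      mul_le_mul_of_nonneg_right hcond (by positivity)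
    have h2 : (T / lamk + (n:ℝ) * γ / (cs * lamk)) * (cs * lamk) = cs * T + n * γ := by
      field_simp
    linarith [h2 ▸ h1]
  -- fixed point, multiplied through by lamStar
  have hfix2 : (n:ℝ) * lamStar - n * γ = (∑ i, lam i / (lam i + lamStar)) * lamStar := by
    rw [← hfix]
    field_simp
  -- Step 1 : lamStar ≥ cs * lamk
  have hstep : cs * lamk ≤ lamStar := by
    by_contra h
    push_neg at h
    have hsum : T / ((1 + cs) * lamk) ≤ ∑ i, lam i / (lam i + lamStar) := by
      calc T / ((1 + cs) * lamk) = ∑ i ∈ S, lam i / ((1 + cs) * lamk) := by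
            rw [Finset.sum_div]
        _ ≤ ∑ i ∈ S, lam i / (lam i + lamStar) := by
            apply Finset.sum_le_sum
            intro i hi
            gcongr
            · exact hnonneg i
            · linarith [hnonneg i]
            · linarith [hle i hi]
        _ ≤ ∑ i, lam i / (lam i + lamStar) := by
            apply Finset.sum_le_sum_of_subset_of_nonneg (Finset.subset_univ S)
            intro i _ _
            exact div_nonneg (hnonneg i) (by linarith [hnonneg i])
    have h4 : T * lamStar ≤ ((n:ℝ) * lamStar - n * γ) * ((1 + cs) * lamk) := by
      have hm := mul_le_mul_of_nonneg_right hsum hpos.le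
      rw [← hfix2] at hm
      rw [div_mul_eq_mul_div, div_le_iff₀ (by positivity)] at hm
      exact hm
    nlinarith [mul_le_mul_of_nonneg_right hcond' hpos.le,
      mul_le_mul_of_nonneg_left h4 hcs.le,
      mul_lt_mul_of_pos_left h (mul_pos hn' hγ),
      mul_pos (mul_pos hcs hcs) hlamk, mul_pos hn' hγ]
  -- Step 2 : conclude
  have hsum2 : cs * T / ((1 + cs) * lamStar) ≤ ∑ i, lam i / (lam i + lamStar) := by
    calc cs * T / ((1 + cs) * lamStar)
        = ∑ i ∈ S, cs * lam i / ((1 + cs) * lamStar) := by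
          rw [← Finset.sum_div, ← Finset.mul_sum]
      _ ≤ ∑ i ∈ S, lam i / (lam i + lamStar) := by
          apply Finset.sum_le_sum
          intro i hi
          rw [div_le_div_iff₀ (by positivity) (by linarith [hnonneg i])]
          have h1 := hle i hi
          have h2 := hnonneg i
          nlinarith [mul_le_mul_of_nonneg_left h1 hcs.le,
            mul_nonneg h2 (by nlinarith [mul_le_mul_of_nonneg_left h1 hcs.le] :
              (0:ℝ) ≤ lamStar - cs * lam i)]
      _ ≤ ∑ i, lam i / (lam i + lamStar) := by
          apply Finset.sum_le_sum_of_subset_of_nonneg (Finset.subset_univ S)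
          intro i _ _
          exact div_nonneg (hnonneg i) (by linarith [hnonneg i])
  have key : cs * T ≤ ((n:ℝ) * lamStar - n * γ) * (1 + cs) := by
    have hm := mul_le_mul_of_nonneg_right hsum2 hpos.le
    rw [← hfix2] at hm
    rw [div_mul_eq_mul_div, div_le_iff₀ (by positivity)] at hm
    have := le_of_mul_le_mul_right (by nlinarith [hm] :
      cs * T * lamStar ≤ ((n:ℝ) * lamStar - n * γ) * (1 + cs) * lamStar) hpos
    linarith
  have key2 : cs * T / (1 + cs) ≤ (n:ℝ) * (lamStar - γ) := by
    rw [div_le_iff₀ hcs1]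
    nlinarith [key]
  rw [ge_iff_le, ← sub_nonneg]
  have e3 : lamStar - (γ + cs / (1 + cs) * ((1:ℝ) / n) * T)
      = ((n:ℝ) * (lamStar - γ) - cs * T / (1 + cs)) / n := by
    field_simp
    ring
  rw [e3]
  exact div_nonneg (by linarith) hn'.le
end

section
/- Gradient flow linearization (empirical risk decay): let f_n : ℝ^p → ℝ^n be continuously differentiable with Jacobian D f_n, let θ_t solve dθ_t/dt = (1/n) D f_n(θ_t)^T (y − f_n(θ_t)), and set σ_min = σ_min(D f_n(θ_0)), L = Lip(D f_n). If L·‖y − f_n(θ_0)‖₂ < σ_min²/4, then for all t ≥ 0: (i) ‖θ_t − θ_0‖₂ ≤ (2/σ_min)‖y − f_n(θ_0)‖₂, and (ii) the empirical risk L̂(θ_t) = (1/2n)‖y − f_n(θ_t)‖² satisfies L̂(θ_t) ≤ L̂(θ_0)·exp(−σ_min² t/(2n)). -/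
open scoped RealInnerProductSpace InnerProduct
open Set

/-!
Along the flow `θ' = η J(θ)† r` the residual `r = y - f θ` satisfies
`‖r‖' = -η ‖J(θ)† r‖² / ‖r‖`, while `‖θ'‖ = η ‖J(θ)† r‖`. Wherever `‖J(θ)† r‖ ≥ κ ‖r‖` this gives
`‖θ'‖ ≤ -‖r‖' / κ`, so `θ` travels at most `(‖r₀‖ - ‖r_t‖) / κ`. With `κ = σ_min / 2`, the Lipschitz
bound and `L ‖r₀‖ ≤ σ_min² / 4` keep `J(θ)†` bounded below by `κ` on the ball of radius `‖r₀‖ / κ`,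
and a continuity argument keeps the flow inside that ball. There `(‖r‖²)' = -2η ‖J(θ)† r‖² ≤
-2ηκ² ‖r‖²`, and Grönwall's inequality gives the exponential decay.
-/

theorem HasDerivAt.norm_of_eq_zero {F : Type*} [NormedAddCommGroup F] [NormedSpace ℝ F]
    {r : ℝ → F} {t : ℝ} (hr : HasDerivAt r 0 t) (h0 : r t = 0) :
    HasDerivAt (fun s => ‖r s‖) 0 t := by
  rw [hasDerivAt_iff_isLittleO] at hr ⊢
  simpa [h0] using hr.norm_left

section

variable {E F : Type*} [NormedAddCommGroup E] [InnerProductSpace ℝ E] [CompleteSpace E]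
  [NormedAddCommGroup F] [InnerProductSpace ℝ F] [CompleteSpace F]

theorem ContinuousLinearMap.adjoint_lowerBound_of_norm_sub_le {A B : E →L[ℝ] F} {σ c : ℝ}
    (hA : ∀ u, σ * ‖u‖ ≤ ‖(A†) u‖) (hAB : ‖A - B‖ ≤ c) (u : F) :
    (σ - c) * ‖u‖ ≤ ‖(B†) u‖ := by
  have hdiff : ‖(A†) u - (B†) u‖ ≤ c * ‖u‖ := calc
    ‖(A†) u - (B†) u‖ = ‖((A - B)†) u‖ := by rw [map_sub, sub_apply]
    _ ≤ ‖(A - B)†‖ * ‖u‖ := ContinuousLinearMap.le_opNorm _ u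
    _ ≤ c * ‖u‖ := by
      rw [LinearIsometryEquiv.norm_map]; exact mul_le_mul_of_nonneg_right hAB (norm_nonneg u)
  linarith [hA u, norm_sub_norm_le ((A†) u) ((B†) u)]

variable {f : E → F} {J : E → E →L[ℝ] F} {y : F} {θ : ℝ → E} {η : ℝ}

theorem hasDerivAt_residual_of_gradientFlow (hJ : ∀ x, HasFDerivAt f (J x) x)
    (hflow : ∀ t, HasDerivAt θ (η • ((J (θ t))†) (y - f (θ t))) t) (t : ℝ) :
    HasDerivAt (fun s => y - f (θ s)) (-(η • J (θ t) (((J (θ t))†) (y - f (θ t))))) t := by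
  simpa using ((hJ (θ t)).comp_hasDerivAt t (hflow t)).const_sub y

theorem hasDerivAt_norm_sq_residual_of_gradientFlow (hJ : ∀ x, HasFDerivAt f (J x) x)
    (hflow : ∀ t, HasDerivAt θ (η • ((J (θ t))†) (y - f (θ t))) t) (t : ℝ) :
    HasDerivAt (fun s => ‖y - f (θ s)‖ ^ 2)
      (-(2 * η) * ‖((J (θ t))†) (y - f (θ t))‖ ^ 2) t := by
  convert (hasDerivAt_residual_of_gradientFlow hJ hflow t).norm_sq using 1
  rw [inner_neg_right, inner_smul_right, ← ContinuousLinearMap.adjoint_inner_left,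
    real_inner_self_eq_norm_sq]
  ring

/-- At a zero of the residual its derivative vanishes as well, so `‖r‖` is differentiable
everywhere; there the formula reads `0 / 0 = 0`. -/
theorem hasDerivAt_norm_residual_of_gradientFlow (hJ : ∀ x, HasFDerivAt f (J x) x)
    (hflow : ∀ t, HasDerivAt θ (η • ((J (θ t))†) (y - f (θ t))) t) (t : ℝ) :
    HasDerivAt (fun s => ‖y - f (θ s)‖)
      (-(η * ‖((J (θ t))†) (y - f (θ t))‖ ^ 2 / ‖y - f (θ t)‖)) t := by
  by_cases h0 : y - f (θ t) = 0
  · have hr := hasDerivAt_residual_of_gradientFlow hJ hflow t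
    simp only [h0, map_zero, smul_zero, neg_zero, norm_zero, div_zero] at hr ⊢
    exact hr.norm_of_eq_zero h0
  · have hsq : (fun s => ‖y - f (θ s)‖) = fun s => √(‖y - f (θ s)‖ ^ 2) := by
      simp only [Real.sqrt_sq (norm_nonneg _)]
    rw [hsq]
    convert (hasDerivAt_norm_sq_residual_of_gradientFlow hJ hflow t).sqrt (by positivity) using 1
    rw [Real.sqrt_sq (norm_nonneg _)]
    field_simp

theorem antitone_norm_residual_of_gradientFlow (hJ : ∀ x, HasFDerivAt f (J x) x)
    (hflow : ∀ t, HasDerivAt θ (η • ((J (θ t))†) (y - f (θ t))) t) (hη : 0 ≤ η) :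
    Antitone fun s => ‖y - f (θ s)‖ := by
  have hres := hasDerivAt_norm_residual_of_gradientFlow hJ hflow
  refine antitone_of_deriv_nonpos (fun s => (hres s).differentiableAt) fun s => ?_
  rw [(hres s).deriv, neg_nonpos]
  positivity

theorem norm_sub_le_of_forall_adjoint_residual_ge (hJ : ∀ x, HasFDerivAt f (J x) x)
    (hflow : ∀ t, HasDerivAt θ (η • ((J (θ t))†) (y - f (θ t))) t) (hη : 0 ≤ η) {κ : ℝ}
    (hκ : 0 < κ) {a b : ℝ} (hab : a ≤ b)
    (hlow : ∀ s ∈ Ico a b, κ * ‖y - f (θ s)‖ ≤ ‖((J (θ s))†) (y - f (θ s))‖) :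
    ‖θ b - θ a‖ ≤ (‖y - f (θ a)‖ - ‖y - f (θ b)‖) / κ := by
  have hres := hasDerivAt_norm_residual_of_gradientFlow hJ hflow
  refine image_norm_le_of_norm_deriv_right_le_deriv_boundary'
    (fun s _ => ((hflow s).sub_const (θ a)).continuousAt.continuousWithinAt)
    (fun s _ => ((hflow s).sub_const (θ a)).hasDerivWithinAt)
    (by simp) (fun s _ => ((hres s).const_sub _).div_const κ |>.continuousAt.continuousWithinAt)
    (fun s _ => ((hres s).const_sub _).div_const κ |>.hasDerivWithinAt) (fun s hs => ?_)
    ⟨hab, le_rfl⟩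
  rw [norm_smul, Real.norm_of_nonneg hη, neg_neg]
  rcases (norm_nonneg (y - f (θ s))).eq_or_lt with hr | hr
  · simp [norm_eq_zero.mp hr.symm]
  · rw [le_div_iff₀ hκ, le_div_iff₀ hr]
    have := mul_le_mul_of_nonneg_left (hlow s hs)
      (mul_nonneg hη (norm_nonneg (((J (θ s))†) (y - f (θ s)))))
    nlinarith

/-- Continuity argument: the estimate extends past a time `x` either because the residual
vanishes at `x` (and then forever after), or because `θ x` then lies strictly inside the ball,
where the lower bound `κ` persists for a while. -/
theorem norm_sub_le_of_gradientFlow (hJ : ∀ x, HasFDerivAt f (J x) x)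
    (hflow : ∀ t, HasDerivAt θ (η • ((J (θ t))†) (y - f (θ t))) t) (hη : 0 ≤ η) {κ : ℝ}
    (hκ : 0 < κ)
    (hlow : ∀ s, ‖θ s - θ 0‖ ≤ ‖y - f (θ 0)‖ / κ → ∀ u, κ * ‖u‖ ≤ ‖((J (θ s))†) u‖)
    {t : ℝ} (ht : 0 ≤ t) :
    ‖θ t - θ 0‖ ≤ (‖y - f (θ 0)‖ - ‖y - f (θ t)‖) / κ := by
  have hθ : Continuous θ := continuous_iff_continuousAt.2 fun s => (hflow s).continuousAt
  have hres : Continuous fun s => ‖y - f (θ s)‖ := continuous_iff_continuousAt.2 fun s =>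
    (hasDerivAt_norm_residual_of_gradientFlow hJ hflow s).continuousAt
  refine IsClosed.mem_of_ge_of_forall_exists_gt
    (s := {s | ‖θ s - θ 0‖ ≤ (‖y - f (θ 0)‖ - ‖y - f (θ s)‖) / κ})
    ((isClosed_le (by fun_prop) (by fun_prop)).inter isClosed_Icc) (by simp) ht ?_
  rintro x ⟨hx, -, hxt⟩
  obtain ⟨u, hxu, hlow'⟩ : ∃ u ∈ Ioc x t,
      ∀ s ∈ Ico x u, κ * ‖y - f (θ s)‖ ≤ ‖((J (θ s))†) (y - f (θ s))‖ := by
    by_cases h0 : y - f (θ x) = 0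
    · refine ⟨t, ⟨hxt, le_rfl⟩, fun s hs => ?_⟩
      have hzero : ‖y - f (θ s)‖ = 0 := le_antisymm
        ((antitone_norm_residual_of_gradientFlow hJ hflow hη hs.1).trans_eq (by simp [h0]))
        (norm_nonneg _)
      simp [hzero]
    · have hin : ‖θ x - θ 0‖ < ‖y - f (θ 0)‖ / κ := hx.trans_lt (by
        gcongr; simpa using norm_pos_iff.2 h0)
      obtain ⟨δ, hδ, hball⟩ := Metric.eventually_nhds_iff.1
        (((hθ.sub continuous_const).norm.tendsto x).eventually (gt_mem_nhds hin))
      refine ⟨min t (x + δ / 2), ⟨lt_min hxt (by linarith), min_le_left _ _⟩,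
        fun s hs => hlow s (hball ?_).le _⟩
      rw [Real.dist_eq, abs_lt]
      constructor <;> linarith [hs.1, hs.2, min_le_right t (x + δ / 2)]
  refine ⟨u, ?_, hxu⟩
  calc ‖θ u - θ 0‖ ≤ ‖θ u - θ x‖ + ‖θ x - θ 0‖ := norm_sub_le_norm_sub_add_norm_sub _ _ _
    _ ≤ (‖y - f (θ x)‖ - ‖y - f (θ u)‖) / κ + (‖y - f (θ 0)‖ - ‖y - f (θ x)‖) / κ :=
        add_le_add (norm_sub_le_of_forall_adjoint_residual_ge hJ hflow hη hκ hxu.1.le hlow') hx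
    _ = (‖y - f (θ 0)‖ - ‖y - f (θ u)‖) / κ := by ring

theorem norm_sq_residual_le_of_gradientFlow (hJ : ∀ x, HasFDerivAt f (J x) x)
    (hflow : ∀ t, HasDerivAt θ (η • ((J (θ t))†) (y - f (θ t))) t) (hη : 0 ≤ η) {κ : ℝ}
    (hκ : 0 ≤ κ) (hlow : ∀ s, 0 ≤ s → κ * ‖y - f (θ s)‖ ≤ ‖((J (θ s))†) (y - f (θ s))‖)
    {t : ℝ} (ht : 0 ≤ t) :
    ‖y - f (θ t)‖ ^ 2 ≤ ‖y - f (θ 0)‖ ^ 2 * Real.exp (-(2 * η * κ ^ 2) * t) := by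
  have hg := hasDerivAt_norm_sq_residual_of_gradientFlow hJ hflow
  have := le_gronwallBound_of_liminf_deriv_right_le (K := -(2 * η * κ ^ 2)) (ε := 0) (a := 0)
    (fun s _ => (hg s).continuousAt.continuousWithinAt)
    (fun s _ _ hr => (hg s).hasDerivWithinAt.liminf_right_slope_le hr) le_rfl ?_ t ⟨ht, le_rfl⟩
  · simpa [gronwallBound_ε0] using this
  intro s hs
  have hsq := pow_le_pow_left₀ (by positivity) (hlow s hs.1) 2
  rw [mul_pow] at hsq
  nlinarith [mul_le_mul_of_nonneg_left hsq (by positivity : 0 ≤ 2 * η)]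

end

theorem gradient_flow_linear_regime_general
    {p n : ℕ}
    (f : EuclideanSpace ℝ (Fin p) → EuclideanSpace ℝ (Fin n))
    (J : EuclideanSpace ℝ (Fin p) →
      (EuclideanSpace ℝ (Fin p) →L[ℝ] EuclideanSpace ℝ (Fin n)))
    (hJ : ∀ x, HasFDerivAt f (J x) x)
    (L : ℝ)
    (hLip : ∀ a b, ‖J a - J b‖ ≤ L * ‖a - b‖)
    (y : EuclideanSpace ℝ (Fin n))
    (θ : ℝ → EuclideanSpace ℝ (Fin p))
    (hflow : ∀ t : ℝ, HasDerivAt θ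
      ((1 / (n : ℝ)) • (ContinuousLinearMap.adjoint (J (θ t)) (y - f (θ t)))) t)
    (σmin : ℝ) (hσ : 0 < σmin)
    (hσmin : ∀ u : EuclideanSpace ℝ (Fin n),
      σmin * ‖u‖ ≤ ‖ContinuousLinearMap.adjoint (J (θ 0)) u‖)
    (hcond : L * ‖y - f (θ 0)‖ < σmin ^ 2 / 4) :
    ∀ t : ℝ, 0 ≤ t →
      ‖θ t - θ 0‖ ≤ (2 / σmin) * ‖y - f (θ 0)‖ ∧
      (1 / (2 * (n : ℝ))) * ‖y - f (θ t)‖ ^ 2 ≤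
        (1 / (2 * (n : ℝ))) * ‖y - f (θ 0)‖ ^ 2 *
          Real.exp (-(σmin ^ 2 / (2 * (n : ℝ))) * t) := by
  intro t ht
  have hκ : 0 < σmin / 2 := half_pos hσ
  have hball : ∀ s, ‖θ s - θ 0‖ ≤ ‖y - f (θ 0)‖ / (σmin / 2) →
      ∀ u, σmin / 2 * ‖u‖ ≤ ‖((J (θ s))†) u‖ := by
    intro s hs u
    have hJs : ‖J (θ 0) - J (θ s)‖ ≤ σmin / 2 := by
      have hd : ‖θ s - θ 0‖ * (σmin / 2) ≤ ‖y - f (θ 0)‖ := (le_div_iff₀ hκ).1 hs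
      refine (hLip _ _).trans ?_
      rw [norm_sub_rev]
      rcases le_total 0 L with hL | hL
      · nlinarith [mul_le_mul_of_nonneg_left hd hL]
      · nlinarith [norm_nonneg (θ s - θ 0)]
    linarith [ContinuousLinearMap.adjoint_lowerBound_of_norm_sub_le hσmin hJs u]
  have hη : (0 : ℝ) ≤ 1 / n := by positivity
  have hdist : ∀ s, 0 ≤ s → ‖θ s - θ 0‖ ≤ ‖y - f (θ 0)‖ / (σmin / 2) := fun s hs =>
    (norm_sub_le_of_gradientFlow hJ hflow hη hκ hball hs).trans
      (by gcongr; linarith [norm_nonneg (y - f (θ s))])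
  have hdecay := norm_sq_residual_le_of_gradientFlow hJ hflow hη hκ.le
    (fun s hs => hball s (hdist s hs) _) ht
  refine ⟨(hdist t ht).trans_eq (by field_simp), ?_⟩
  have hrate : -(σmin ^ 2 / (2 * (n : ℝ))) * t = -(2 * (1 / n) * (σmin / 2) ^ 2) * t := by ring
  rw [hrate, mul_assoc]
  exact mul_le_mul_of_nonneg_left hdecay (by positivity)

/-- Gradient flow in the linear (lazy) regime: if `f_n : ℝ^p → ℝ^n` has Jacobian `J`
with Lipschitz constant `L`, `σ_min` is a lower bound on the smallest singular value
of `J(θ₀)`, and `L ‖y - f_n(θ₀)‖ < σ_min²/4`, then along the gradient flow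
`dθ_t/dt = (1/n) J(θ_t)ᵀ (y - f_n(θ_t))` one has, for all `t ≥ 0`:
(i) `‖θ_t - θ₀‖ ≤ (2/σ_min) ‖y - f_n(θ₀)‖`, and
(ii) `L̂(θ_t) = (1/2n)‖y - f_n(θ_t)‖² ≤ L̂(θ₀) exp(-σ_min² t/(2n))`. -/
theorem gradient_flow_linear_regime
    {p n : ℕ} (hn : 0 < n)
    (f : EuclideanSpace ℝ (Fin p) → EuclideanSpace ℝ (Fin n))
    (J : EuclideanSpace ℝ (Fin p) →
      (EuclideanSpace ℝ (Fin p) →L[ℝ] EuclideanSpace ℝ (Fin n)))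
    (hJ : ∀ x, HasFDerivAt f (J x) x)
    (L : ℝ) (hL0 : 0 ≤ L)
    (hLip : ∀ a b, ‖J a - J b‖ ≤ L * ‖a - b‖)
    (y : EuclideanSpace ℝ (Fin n))
    (θ : ℝ → EuclideanSpace ℝ (Fin p))
    (hflow : ∀ t : ℝ, HasDerivAt θ
      ((1 / (n : ℝ)) • (ContinuousLinearMap.adjoint (J (θ t)) (y - f (θ t)))) t)
    (σmin : ℝ) (hσ : 0 < σmin)
    (hσmin : ∀ u : EuclideanSpace ℝ (Fin n),
      σmin * ‖u‖ ≤ ‖ContinuousLinearMap.adjoint (J (θ 0)) u‖)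
    (hcond : L * ‖y - f (θ 0)‖ < σmin ^ 2 / 4) :
    ∀ t : ℝ, 0 ≤ t →
      ‖θ t - θ 0‖ ≤ (2 / σmin) * ‖y - f (θ 0)‖ ∧
      (1 / (2 * (n : ℝ))) * ‖y - f (θ t)‖ ^ 2 ≤
        (1 / (2 * (n : ℝ))) * ‖y - f (θ 0)‖ ^ 2 *
          Real.exp (-(σmin ^ 2 / (2 * (n : ℝ))) * t) :=
  gradient_flow_linear_regime_general f J hJ L hLip y θ hflow σmin hσ hσmin hcond
end
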